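/- For any words w and u in signed letters, ε_{ij}(w u w^{-1}) = ε_{ij}(u) + ε_i(w) ε_j(u) − ε_i(u) ε_j(w), where w^{-1} denotes the reversed word with all signs negated. -/

import Mathlib

/-- A word in signed letters `m_p^{±1}`: a list of (letter index, sign),
with sign `true` meaning `+1` and `false` meaning `-1`. -/
abbrev SWord (ℓ : ℕ) := List (Fin ℓ × Bool)

/-- The sign value of a boolean sign. -/
def sgn (b : Bool) : ℤ := if b then 1 else -1

/-- `eps i w` is the exponent sum of the letter `m_i` in the word `w`. -/
def eps {ℓ : ℕ} (i : Fin ℓ) : SWord ℓ → ℤ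
  | [] => 0
  | x :: t => (if x.1 = i then sgn x.2 else 0) + eps i t

/-- `epsPair i j w` is the signed count of ordered pairs of positions `p < q`
in `w` carrying `m_i^r` and `m_j^s` respectively, each contributing `r * s`. -/
def epsPair {ℓ : ℕ} (i j : Fin ℓ) : SWord ℓ → ℤ
  | [] => 0
  | x :: t => (if x.1 = i then sgn x.2 * eps j t else 0) + epsPair i j t

/-- Formal inverse of a word: reverse the list and negate each sign. -/
def winv {ℓ : ℕ} (w : SWord ℓ) : SWord ℓ :=
  w.reverse.map (fun x => (x.1, !x.2))

/-- The word `m_i^p` for an integer `p`: `|p|` copies of `m_i^{sign p}`. -/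
def zpowWord {ℓ : ℕ} (i : Fin ℓ) (p : ℤ) : SWord ℓ :=
  List.replicate p.natAbs (i, decide (0 ≤ p))

/-- The element of the free group represented by a word of signed letters. -/
def toFree {ℓ : ℕ} (w : SWord ℓ) : FreeGroup (Fin ℓ) :=
  (w.map (fun x => if x.2 then FreeGroup.of x.1 else (FreeGroup.of x.1)⁻¹)).prod


/-!
Both `eps` and `epsPair` are additive on concatenation up to the cross term
`ε_i(a) ε_j(b)`. Reversing a word and negating its signs turns `ε_{ij}` into `ε_{ji}`, and
for `i ≠ j` every pair of occurrences of `m_i` and `m_j` is counted by exactly one of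
`ε_{ij}`, `ε_{ji}`, so `ε_{ij}(w) + ε_{ij}(w⁻¹) = ε_i(w) ε_j(w)`. Expanding `w u w⁻¹` with
these rules gives the formula.
-/

section SignedWords

variable {ℓ : ℕ} (i j : Fin ℓ)

@[simp]
lemma sgn_not (b : Bool) : sgn (!b) = -sgn b := by
  cases b <;> rfl

@[simp]
lemma eps_nil : eps i ([] : SWord ℓ) = 0 := rfl

@[simp]
lemma eps_cons (x : Fin ℓ × Bool) (t : SWord ℓ) :
    eps i (x :: t) = (if x.1 = i then sgn x.2 else 0) + eps i t := rfl

@[simp]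
lemma epsPair_nil : epsPair i j ([] : SWord ℓ) = 0 := rfl

@[simp]
lemma epsPair_cons (x : Fin ℓ × Bool) (t : SWord ℓ) :
    epsPair i j (x :: t) = (if x.1 = i then sgn x.2 * eps j t else 0) + epsPair i j t := rfl

lemma eps_append (a b : SWord ℓ) : eps i (a ++ b) = eps i a + eps i b := by
  induction a with
  | nil => simp
  | cons x t ih => simp [ih, add_assoc]

lemma epsPair_append (a b : SWord ℓ) :
    epsPair i j (a ++ b) = epsPair i j a + epsPair i j b + eps i a * eps j b := by
  induction a with
  | nil => simp
  | cons x t ih =>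
    simp only [List.cons_append, epsPair_cons, eps_cons, ih, eps_append]
    split_ifs <;> ring

lemma winv_cons (x : Fin ℓ × Bool) (t : SWord ℓ) :
    winv (x :: t) = winv t ++ [(x.1, !x.2)] := by
  simp [winv]

lemma eps_winv (w : SWord ℓ) : eps i (winv w) = -eps i w := by
  induction w with
  | nil => rfl
  | cons x t ih =>
    rw [winv_cons, eps_append, ih]
    simp only [eps_cons, eps_nil, sgn_not]
    split_ifs <;> ring

lemma epsPair_winv (w : SWord ℓ) : epsPair i j (winv w) = epsPair j i w := by
  induction w with
  | nil => rfl
  | cons x t ih =>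
    rw [winv_cons, epsPair_append, ih, eps_winv]
    simp only [epsPair_cons, eps_cons, epsPair_nil, eps_nil, sgn_not]
    split_ifs <;> ring

lemma epsPair_add_epsPair_swap {i j : Fin ℓ} (hij : i ≠ j) (w : SWord ℓ) :
    epsPair i j w + epsPair j i w = eps i w * eps j w := by
  induction w with
  | nil => simp
  | cons x t ih =>
    simp only [epsPair_cons, eps_cons]
    by_cases hi : x.1 = i
    · simp only [hi, hij, if_true, if_false]
      linear_combination ih
    · split_ifs <;> linear_combination ih

end SignedWords

/-- ε_{ij}(w u w⁻¹) = ε_{ij}(u) + ε_i(w) ε_j(u) − ε_i(u) ε_j(w). -/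
theorem epsPair_conj {ℓ : ℕ} (i j : Fin ℓ) (hij : i ≠ j) (w u : SWord ℓ) :
    epsPair i j (w ++ u ++ winv w) =
      epsPair i j u + eps i w * eps j u - eps i u * eps j w := by
  rw [epsPair_append, epsPair_append, epsPair_winv, eps_winv, eps_append]
  linear_combination epsPair_add_epsPair_swap hij w
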